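/- arXiv:2112.04581 — 6 statements merged into one kernel-verified Lean document; each statement's English description precedes it below -/
import Mathlib

section
/- Let p_1, …, p_n be pairwise distinct primes with 2^(η-1) ≤ p_i for all i, let x_0 = ∏_{i=1}^n p_i and p̂_i = x_0 / p_i. Let P̂ be an integer with P̂ ≡ p̂_i (mod p_i) for every i, and let a be an integer with a ≡ r_i (mod p_i) where |r_i| < 2^ε for every i. Then (1) a·P̂ ≡ ∑_{i=1}^n r_i·p̂_i (mod x_0), and (2) if moreover n·2^(ε+1) ≤ 2^(η-1), then |∑_{i=1}^n r_i·p̂_i| < x_0/2, so ∑_{i=1}^n r_i·p̂_i is the unique representative of a·P̂ mod x_0 lying in the interval (−x_0/2, x_0/2]. -/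
/-!
Modulo `p i` every term `r j * p̂ j` with `j ≠ i` vanishes, so both `a * P` and the sum are
`≡ r i * p̂ i`; the primes are pairwise coprime, so the congruences glue to one modulo `x₀`.
Since `p̂ i ≤ x₀ / 2^(η-1)` and `|r i| < 2^ε`, the sum has absolute value below
`n * 2^ε * x₀ / 2^(η-1) ≤ x₀ / 2`, and two integers congruent modulo `x₀` in the same
half-open window of length `x₀` coincide.
-/

open Finset Function

theorem Int.isCoprime_of_prime_of_ne {p q : ℤ} (hp : Prime p) (hq : Prime q) (hp0 : 0 ≤ p)
    (hq0 : 0 ≤ q) (hpq : p ≠ q) : IsCoprime p q :=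
  hp.coprime_iff_not_dvd.2 fun hdvd =>
    hpq (Int.eq_of_associated_of_nonneg (hp.associated_of_dvd hq hdvd) hp0 hq0)

theorem Int.modEq_prod_of_forall_modEq {ι : Type*} [Fintype ι] {p : ι → ℤ} {a b : ℤ}
    (hcop : Pairwise (IsCoprime on p)) (h : ∀ i, a ≡ b [ZMOD p i]) :
    a ≡ b [ZMOD ∏ i, p i] :=
  Int.modEq_iff_dvd.2 (Fintype.prod_dvd_of_coprime hcop fun i => (h i).dvd)

theorem Int.sum_mul_prod_erase_modEq {ι : Type*} [DecidableEq ι] (s : Finset ι)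
    (p r : ι → ℤ) {i : ι} (hi : i ∈ s) :
    ∑ j ∈ s, r j * ∏ k ∈ s.erase j, p k ≡ r i * ∏ k ∈ s.erase i, p k [ZMOD p i] :=
  Int.sum_modEq_single (fun hi' => absurd hi hi') fun _ _ hji =>
    Int.modEq_zero_iff_dvd.2 <|
      dvd_mul_of_dvd_right (dvd_prod_of_mem p (mem_erase.2 ⟨hji.symm, hi⟩))

theorem Int.ModEq.eq_of_neg_lt_two_mul_le {a b m : ℤ} (h : a ≡ b [ZMOD m]) (ha : -m < 2 * a)
    (ha' : 2 * a ≤ m) (hb : -m < 2 * b) (hb' : 2 * b ≤ m) : a = b := by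
  have hlt : |b - a| < m := abs_sub_lt_iff.2 ⟨by linarith, by linarith⟩
  linarith [Int.eq_zero_of_abs_lt_dvd h.dvd hlt]

theorem Int.two_mul_abs_sum_mul_lt {ι : Type*} [Fintype ι] {r c : ι → ℤ} {B L X : ℤ}
    (hr : ∀ i, |r i| < B) (hc : ∀ i, 0 ≤ c i) (hcX : ∀ i, L * c i ≤ X) (hL : 0 < L)
    (hX : 0 < X) (hcard : Fintype.card ι * (2 * B) ≤ L) :
    2 * |∑ i, r i * c i| < X := by
  have hsum : L * (2 * |∑ i, r i * c i|) ≤ Fintype.card ι * (2 * (B - 1)) * X :=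
    calc L * (2 * |∑ i, r i * c i|) ≤ L * (2 * ∑ i, |r i| * c i) := by
          gcongr
          simpa only [abs_mul, abs_of_nonneg (hc _)] using
            abs_sum_le_sum_abs (fun i => r i * c i) univ
      _ = 2 * ∑ i, |r i| * (L * c i) := by
          rw [mul_left_comm, mul_sum]
          exact congrArg _ (sum_congr rfl fun i _ => mul_left_comm _ _ _)
      _ ≤ 2 * ∑ _i : ι, (B - 1) * X := by
          gcongr with i
          · exact mul_nonneg hL.le (hc i)
          · exact (abs_nonneg _).trans (Int.le_sub_one_of_lt (hr i))
          · exact Int.le_sub_one_of_lt (hr i)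
          · exact hcX i
      _ = Fintype.card ι * (2 * (B - 1)) * X := by
          rw [sum_const, card_univ, nsmul_eq_mul]; ring
  have hcoef : (Fintype.card ι : ℤ) * (2 * (B - 1)) < L := by
    rcases (Fintype.card ι).eq_zero_or_pos with hι | hι
    · simpa [hι] using hL
    · have : (0 : ℤ) < Fintype.card ι := by exact_mod_cast hι
      linarith
  exact lt_of_mul_lt_mul_left (hsum.trans_lt (mul_lt_mul_of_pos_right hcoef hX)) hL.le

/-- CHLRS15 CRT-ACD key lemma: for pairwise distinct η-bit primes `p i` with
product `x0` and `phat i = x0 / p i`, an auxiliary `P ≡ phat i (mod p i)` and a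
sample `a ≡ r i (mod p i)` with `|r i| < 2^ε` satisfy
`a * P ≡ ∑ i, r i * phat i (mod x0)`; and if `n * 2^(ε+1) ≤ 2^(η-1)` then the
sum lies in `(-x0/2, x0/2]` and is the unique such representative. -/
theorem clt_crt_acd_lemma (n η ε : ℕ) (p : Fin n → ℤ)
    (hp : ∀ i, Prime (p i))
    (hdist : ∀ i j : Fin n, i ≠ j → p i ≠ p j)
    (hsize : ∀ i, (2 : ℤ) ^ (η - 1) ≤ p i)
    (x0 : ℤ) (hx0 : x0 = ∏ i, p i)
    (phat : Fin n → ℤ) (hphat : ∀ i, phat i = x0 / p i)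
    (P : ℤ) (hP : ∀ i, P ≡ phat i [ZMOD p i])
    (a : ℤ) (r : Fin n → ℤ)
    (ha : ∀ i, a ≡ r i [ZMOD p i])
    (hr : ∀ i, |r i| < 2 ^ ε) :
    (a * P ≡ ∑ i, r i * phat i [ZMOD x0]) ∧
    ((n : ℤ) * 2 ^ (ε + 1) ≤ 2 ^ (η - 1) →
      2 * |∑ i, r i * phat i| < x0 ∧
      ∀ m : ℤ, a * P ≡ m [ZMOD x0] → -x0 < 2 * m → 2 * m ≤ x0 →
        m = ∑ i, r i * phat i) := by
  have hpos : ∀ i, 0 < p i := fun i => (pow_pos two_pos _).trans_le (hsize i)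
  have hphat_prod : ∀ i, phat i = ∏ j ∈ univ.erase i, p j := fun i => by
    rw [hphat, hx0, ← mul_prod_erase _ _ (mem_univ i), Int.mul_ediv_cancel_left _ (hpos i).ne']
  have hx0_eq : ∀ i, p i * phat i = x0 := fun i => by
    rw [hphat_prod, hx0, mul_prod_erase _ _ (mem_univ i)]
  have hphat_pos : ∀ i, 0 < phat i := fun i => hphat_prod i ▸ prod_pos fun j _ => hpos j
  have hcop : Pairwise (IsCoprime on p) := fun i j hij =>
    Int.isCoprime_of_prime_of_ne (hp i) (hp j) (hpos i).le (hpos j).le (hdist i j hij)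
  have hcongr : a * P ≡ ∑ i, r i * phat i [ZMOD x0] := by
    rw [hx0]
    refine Int.modEq_prod_of_forall_modEq hcop fun i => ((ha i).mul (hP i)).trans ?_
    simp only [hphat_prod]
    exact (Int.sum_mul_prod_erase_modEq univ p r (mem_univ i)).symm
  refine ⟨hcongr, fun hn => ?_⟩
  have hx0_pos : 0 < x0 := hx0 ▸ prod_pos fun i _ => hpos i
  have hbound : 2 * |∑ i, r i * phat i| < x0 := by
    refine Int.two_mul_abs_sum_mul_lt hr (fun i => (hphat_pos i).le)
      (fun i => ?_) (pow_pos two_pos _) hx0_pos (by simpa [pow_succ, mul_comm] using hn)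
    rw [← hx0_eq i]
    exact mul_le_mul_of_nonneg_right (hsize i) (hphat_pos i).le
  have hsum_abs : |2 * ∑ i, r i * phat i| < x0 := by rwa [abs_mul, abs_two]
  obtain ⟨hlo, hhi⟩ := abs_lt.1 hsum_abs
  exact ⟨hbound, fun m hm hm₁ hm₂ =>
    (hm.symm.trans hcongr).eq_of_neg_lt_two_mul_le hm₁ hm₂ hlo hhi.le⟩
end

section
/- Let p_1, …, p_n be pairwise distinct primes, x_0 = ∏_{k=1}^n p_k, and let b be an integer with b ≡ b_k (mod p_k) for every k, where the b_k are pairwise distinct integers with |b_k| < 2^ε and 2^(ε+1) < p_k for every k. Fix an index i and assume b ≠ b_i. Then gcd(b − b_i, x_0) = p_i. -/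
/-- Final step of the CHLRS15 attack: for pairwise distinct primes `p k` with
product `x0`, and `b ≡ bk k (mod p k)` with pairwise distinct residues
`|bk k| < 2^ε` and `2^(ε+1) < p k`, if `b ≠ bk i` then
`gcd (b - bk i, x0) = p i`. -/
theorem clt_attack_gcd_extracts_prime (n ε : ℕ) (p : Fin n → ℕ)
    (hp : ∀ k, (p k).Prime)
    (hdist : ∀ k l : Fin n, k ≠ l → p k ≠ p l)
    (x0 : ℕ) (hx0 : x0 = ∏ k, p k)
    (b : ℤ) (bk : Fin n → ℤ)
    (hb : ∀ k, b ≡ bk k [ZMOD (p k : ℤ)])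
    (hbk : ∀ k l : Fin n, k ≠ l → bk k ≠ bk l)
    (hsmall : ∀ k, |bk k| < 2 ^ ε)
    (hbig : ∀ k, (2 : ℤ) ^ (ε + 1) < (p k : ℤ))
    (i : Fin n) (hne : b ≠ bk i) :
    Int.gcd (b - bk i) (x0 : ℤ) = p i := by
  set a : ℤ := b - bk i with ha
  -- p i divides a
  have hpi : (p i : ℤ) ∣ a := (hb i).symm.dvd
  -- for k ≠ i, p k does not divide a
  have hnd : ∀ k : Fin n, k ≠ i → ¬ (p k : ℤ) ∣ a := by
    intro k hk hdvd
    have h1 : (p k : ℤ) ∣ bk k - b := (hb k).dvd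
    have h2 : (p k : ℤ) ∣ bk k - bk i := by
      have := dvd_add h1 hdvd
      simpa [ha, sub_add_sub_cancel] using this
    have hne' : bk k - bk i ≠ 0 := sub_ne_zero.mpr (hbk k i hk)
    have hlt : |bk k - bk i| < (p k : ℤ) := by
      calc |bk k - bk i| ≤ |bk k| + |bk i| := abs_sub _ _
        _ < 2 ^ ε + 2 ^ ε := add_lt_add (hsmall k) (hsmall i)
        _ = 2 ^ (ε + 1) := by ring
        _ < (p k : ℤ) := hbig k
    have := Int.le_of_dvd (abs_pos.mpr hne') ((dvd_abs _ _).mpr h2)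
    omega
  -- split product
  have hx0' : x0 = p i * ∏ k ∈ Finset.univ.erase i, p k := by
    rw [hx0, ← Finset.mul_prod_erase Finset.univ p (Finset.mem_univ i)]
  set r : ℕ := ∏ k ∈ Finset.univ.erase i, p k with hr
  -- a coprime to r
  have hcop : IsCoprime a (r : ℤ) := by
    rw [hr]
    push_cast
    apply IsCoprime.prod_right
    intro k hk
    have hkne : k ≠ i := Finset.ne_of_mem_erase hk
    have hpk : Prime ((p k : ℤ)) := Int.prime_iff_natAbs_prime.mpr (by simpa using hp k)
    exact ((hpk.coprime_iff_not_dvd).mpr (fun h => hnd k hkne h)).symm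
  -- compute gcd
  have hgr : Int.gcd a (r : ℤ) = 1 := Int.isCoprime_iff_gcd_eq_one.mp hcop
  have key : Int.gcd a ((p i : ℤ) * r) = Int.gcd a (p i : ℤ) := by
    have : Nat.Coprime a.natAbs r := by
      simpa [Int.gcd] using hgr
    have := Nat.Coprime.gcd_mul_right_cancel_right (k := r) (m := a.natAbs) (p i) this.symm
    simpa [Int.gcd, Int.natAbs_mul] using this
  have hgp : Int.gcd a (p i : ℤ) = p i := by
    have h1 : p i ∣ a.natAbs := Int.natAbs_dvd_natAbs.mpr (by simpa using hpi)
    simpa [Int.gcd] using Nat.gcd_eq_right h1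
  rw [hx0']
  push_cast
  rw [key, hgp]
end

section
/- Let p_1, …, p_n be pairwise coprime integers, x_0 = ∏_{i=1}^n p_i. Fix integers z, κ ≥ 1, and for each i integers g_i, r_i, m_i, t_i, u_i, h_i with t_i·g_i ≡ z^κ (mod p_i) and u_i·g_i ≡ 1 (mod p_i). Let c be an integer with c·z^κ ≡ r_i·g_i + m_i (mod p_i) for every i, and let w be an integer with w ≡ ∑_{i=1}^n h_i·t_i·(x_0/p_i) (mod x_0). Then c·w ≡ ∑_{i=1}^n h_i·(r_i + m_i·u_i)·(x_0/p_i) (mod x_0). In particular, if m_i = 0 for all i, then c·w ≡ ∑_{i=1}^n h_i·r_i·(x_0/p_i) (mod x_0). -/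
/-- CLT13 zero-testing identity: for pairwise coprime `p i` with product `x0`,
`t i * g i ≡ z^κ (mod p i)`, `u i * g i ≡ 1 (mod p i)`, a top-level encoding
`c` with `c * z^κ ≡ r i * g i + m i (mod p i)`, and a zero-test component
`w ≡ ∑ i, h i * t i * (x0 / p i) (mod x0)`, we have
`c * w ≡ ∑ i, h i * (r i + m i * u i) * (x0 / p i) (mod x0)`; in particular if
all `m i = 0` then `c * w ≡ ∑ i, h i * r i * (x0 / p i) (mod x0)`. -/
theorem clt_zero_test_identity (n : ℕ) (p : Fin n → ℤ)
    (hco : ∀ i j : Fin n, i ≠ j → IsCoprime (p i) (p j))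
    (x0 : ℤ) (hx0 : x0 = ∏ i, p i)
    (z : ℤ) (κ : ℕ) (hκ : 1 ≤ κ)
    (g r m t u h : Fin n → ℤ)
    (ht : ∀ i, t i * g i ≡ z ^ κ [ZMOD p i])
    (hu : ∀ i, u i * g i ≡ 1 [ZMOD p i])
    (c : ℤ) (hc : ∀ i, c * z ^ κ ≡ r i * g i + m i [ZMOD p i])
    (w : ℤ) (hw : w ≡ ∑ i, h i * t i * (x0 / p i) [ZMOD x0]) :
    (c * w ≡ ∑ i, h i * (r i + m i * u i) * (x0 / p i) [ZMOD x0]) ∧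
    ((∀ i, m i = 0) → c * w ≡ ∑ i, h i * r i * (x0 / p i) [ZMOD x0]) := by
  have key : c * w ≡ ∑ i, h i * (r i + m i * u i) * (x0 / p i) [ZMOD x0] := by
    by_cases hzero : ∀ i, p i ≠ 0
    · -- all moduli nonzero
      have hdvd : ∀ i, p i ∣ x0 := by
        intro i; rw [hx0]; exact Finset.dvd_prod_of_mem _ (Finset.mem_univ i)
      have hqdvd : ∀ i j : Fin n, i ≠ j → p i ∣ x0 / p j := by
        intro i j hij
        have hq : x0 / p j = ∏ k ∈ Finset.univ.erase j, p k := by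
          rw [hx0, ← Finset.prod_erase_mul Finset.univ p (Finset.mem_univ j),
            Int.mul_ediv_cancel _ (hzero j)]
        rw [hq]
        exact Finset.dvd_prod_of_mem _ (Finset.mem_erase.mpr ⟨hij, Finset.mem_univ i⟩)
      -- reduce to componentwise divisibility
      have hsumloc : ∀ (i : Fin n) (f : Fin n → ℤ),
          (∑ j, f j * (x0 / p j)) ≡ f i * (x0 / p i) [ZMOD p i] := by
        intro i f
        apply Int.ModEq.symm
        rw [Int.modEq_iff_dvd, ← Finset.sum_erase_add _ _ (Finset.mem_univ i),
          add_sub_cancel_right]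
        exact Finset.dvd_sum fun j hj =>
          Dvd.dvd.mul_left (hqdvd i j (Finset.mem_erase.mp hj).1.symm) (f j)
      have hpoint : ∀ i : Fin n,
          c * w ≡ ∑ j, h j * (r j + m j * u j) * (x0 / p j) [ZMOD p i] := by
        intro i
        have e1 : c * t i ≡ r i + m i * u i [ZMOD p i] := by
          have a1 : c * t i * (u i * g i) ≡ c * t i * 1 [ZMOD p i] :=
            (hu i).mul_left _
          have a2 : c * t i * (u i * g i) = c * (t i * g i) * u i := by ring
          have a3 : c * (t i * g i) * u i ≡ c * z ^ κ * u i [ZMOD p i] :=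
            ((ht i).mul_left c).mul_right _
          have a4 : c * z ^ κ * u i ≡ (r i * g i + m i) * u i [ZMOD p i] :=
            (hc i).mul_right _
          have a5 : (r i * g i + m i) * u i = r i * (u i * g i) + m i * u i := by ring
          have a6 : r i * (u i * g i) + m i * u i ≡ r i * 1 + m i * u i [ZMOD p i] :=
            ((hu i).mul_left _).add_right _
          calc c * t i = c * t i * 1 := by ring
            _ ≡ c * t i * (u i * g i) [ZMOD p i] := a1.symm
            _ = c * (t i * g i) * u i := a2
            _ ≡ c * z ^ κ * u i [ZMOD p i] := a3
            _ ≡ (r i * g i + m i) * u i [ZMOD p i] := a4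
            _ = r i * (u i * g i) + m i * u i := a5
            _ ≡ r i * 1 + m i * u i [ZMOD p i] := a6
            _ = r i + m i * u i := by ring
        have hw' : w ≡ ∑ j, h j * t j * (x0 / p j) [ZMOD p i] :=
          hw.of_dvd (hdvd i)
        calc c * w ≡ c * ∑ j, (h j * t j) * (x0 / p j) [ZMOD p i] := hw'.mul_left c
          _ ≡ c * ((h i * t i) * (x0 / p i)) [ZMOD p i] :=
            (hsumloc i (fun j => h j * t j)).mul_left c
          _ = h i * (c * t i) * (x0 / p i) := by ring
          _ ≡ h i * (r i + m i * u i) * (x0 / p i) [ZMOD p i] :=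
            ((e1.mul_left (h i)).mul_right _)
          _ ≡ ∑ j, h j * (r j + m j * u j) * (x0 / p j) [ZMOD p i] :=
            (hsumloc i (fun j => h j * (r j + m j * u j))).symm
      have hxdvd : ∀ y : ℤ, (∏ i, p i) ∣ y → x0 ∣ y := by
        rw [hx0]; exact fun y hy => hy
      apply Int.ModEq.symm
      rw [Int.modEq_iff_dvd]
      refine hxdvd _ (Finset.prod_dvd_of_coprime
        (fun i _ j _ hij => hco i j hij) fun i _ => ?_)
      rw [← Int.modEq_iff_dvd]
      exact (hpoint i).symm
    · -- some modulus is zero, hence x0 = 0 and all terms vanish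
      push_neg at hzero
      obtain ⟨i, hi⟩ := hzero
      have hx : x0 = 0 := by
        rw [hx0]; exact Finset.prod_eq_zero (Finset.mem_univ i) hi
      subst hx
      simp only [Int.zero_ediv, mul_zero, Finset.sum_const_zero] at hw ⊢
      have : w = 0 := by simpa [Int.ModEq] using hw
      simp [this]
  refine ⟨key, fun hm => ?_⟩
  have : ∀ i : Fin n, h i * (r i + m i * u i) * (x0 / p i)
      = h i * r i * (x0 / p i) := by intro i; rw [hm i]; ring
  simpa [this] using key
end

section
/- Let n, ℓ, N ≥ 1, let S_1, …, S_ℓ ⊆ {1,…,n}, and let T ⊆ {1,…,ℓ} be an exact cover (the S_i for i ∈ T are pairwise disjoint with union {1,…,n}). For each k = 1,…,N let p_k be an integer, and let g_k, a_j^{(k)} (j = 1,…,n), z_j (j = 1,…,n) be integers. Suppose c_1, …, c_ℓ and d are integers such that for every i and every k, c_i · ∏_{j∈S_i} z_j ≡ ρ_{k,i}·g_k + ∏_{j∈S_i} a_j^{(k)} (mod p_k) for some integers ρ_{k,i}, and for every k, d · ∏_{j=1}^n z_j ≡ σ_k·g_k + ∏_{j=1}^n a_j^{(k)} (mod p_k)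 for some integer σ_k. Then for every k there exists an integer t_k such that (d − ∏_{i∈T} c_i) · ∏_{j=1}^n z_j ≡ t_k·g_k (mod p_k); i.e., d − ∏_{i∈T} c_i is a top-level encoding of 0. -/
/-!
Work in `ℤ ⧸ (g k, p k)`, where an encoding times its level denominator becomes its
plaintext. Since the sets `S i` for `i ∈ T` partition `{1,…,n}`, the product of the `c i`
times `∏ j, z j` becomes `∏ j, a k j`, exactly as `d * ∏ j, z j` does, so the top-level
numerator of `d - ∏ i ∈ T, c i` vanishes there.
-/

open Finset

theorem Int.exists_modEq_mul_add_iff (m g x y : ℤ) :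
    (∃ ρ : ℤ, x ≡ ρ * g + y [ZMOD m]) ↔
      Ideal.Quotient.mk (Ideal.span {g, m}) x = Ideal.Quotient.mk (Ideal.span {g, m}) y := by
  simp only [Ideal.Quotient.eq, Ideal.mem_span_pair, Int.modEq_iff_dvd, dvd_def]
  constructor
  · rintro ⟨ρ, e, he⟩
    exact ⟨ρ, -e, by linear_combination he⟩
  · rintro ⟨ρ, e, he⟩
    exact ⟨ρ, -e, by linear_combination he⟩

theorem Finset.prod_univ_eq_prod_prod_of_exactCover {ι α M : Type*} [Fintype α]
    [DecidableEq α] [CommMonoid M] {S : ι → Finset α} {T : Finset ι}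
    (hdisj : (T : Set ι).PairwiseDisjoint S) (hcover : T.biUnion S = univ) (f : α → M) :
    ∏ j, f j = ∏ i ∈ T, ∏ j ∈ S i, f j := by
  rw [← hcover, prod_biUnion hdisj]

theorem witness_encryption_decrypt_zero_general (n ℓ N : ℕ)
    (S : Fin ℓ → Finset (Fin n)) (T : Finset (Fin ℓ))
    (hdisj : ∀ i ∈ T, ∀ i' ∈ T, i ≠ i' → Disjoint (S i) (S i'))
    (hcover : T.biUnion S = Finset.univ)
    (p g : Fin N → ℤ) (a : Fin N → Fin n → ℤ) (z : Fin n → ℤ)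
    (c : Fin ℓ → ℤ) (d : ℤ)
    (hc : ∀ i : Fin ℓ, ∀ k : Fin N, ∃ ρ : ℤ,
      c i * ∏ j ∈ S i, z j ≡ ρ * g k + ∏ j ∈ S i, a k j [ZMOD p k])
    (hd : ∀ k : Fin N, ∃ σ : ℤ,
      d * ∏ j, z j ≡ σ * g k + ∏ j, a k j [ZMOD p k]) :
    ∀ k : Fin N, ∃ t : ℤ,
      (d - ∏ i ∈ T, c i) * ∏ j, z j ≡ t * g k [ZMOD p k] := by
  intro k
  set π := Ideal.Quotient.mk (Ideal.span {g k, p k})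
  have hprod := prod_univ_eq_prod_prod_of_exactCover (M := ℤ) hdisj hcover
  have hcT : π ((∏ i ∈ T, c i) * ∏ j, z j) = π (∏ j, a k j) := by
    rw [hprod, hprod, ← prod_mul_distrib, map_prod, map_prod]
    exact prod_congr rfl fun i _ => (Int.exists_modEq_mul_add_iff ..).mp (hc i k)
  have hdT : π (d * ∏ j, z j) = π (∏ j, a k j) := (Int.exists_modEq_mul_add_iff ..).mp (hd k)
  simpa using (Int.exists_modEq_mul_add_iff _ _ _ 0).mpr (by rw [sub_mul, map_sub, hcT, hdT]; simp)

/-- Decryption correctness for witness encryption over asymmetric CLT13: if `T`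
is an exact cover of `{1,…,n}` by the sets `S i`, each `c i` encodes
`∏ j ∈ S i, a k j` at level `1_{S i}` (denominator `∏ j ∈ S i, z j` modulo each
secret prime `p k`), and `d` encodes `∏ j, a k j` at the top level, then
`d - ∏ i ∈ T, c i` is a top-level encoding of `0`: its top-level numerator is
divisible by `g k` modulo each `p k`. -/
theorem witness_encryption_decrypt_zero (n ℓ N : ℕ)
    (hn : 1 ≤ n) (hℓ : 1 ≤ ℓ) (hN : 1 ≤ N)
    (S : Fin ℓ → Finset (Fin n)) (T : Finset (Fin ℓ))
    (hdisj : ∀ i ∈ T, ∀ i' ∈ T, i ≠ i' → Disjoint (S i) (S i'))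
    (hcover : T.biUnion S = Finset.univ)
    (p g : Fin N → ℤ) (a : Fin N → Fin n → ℤ) (z : Fin n → ℤ)
    (c : Fin ℓ → ℤ) (d : ℤ)
    (hc : ∀ i : Fin ℓ, ∀ k : Fin N, ∃ ρ : ℤ,
      c i * ∏ j ∈ S i, z j ≡ ρ * g k + ∏ j ∈ S i, a k j [ZMOD p k])
    (hd : ∀ k : Fin N, ∃ σ : ℤ,
      d * ∏ j, z j ≡ σ * g k + ∏ j, a k j [ZMOD p k]) :
    ∀ k : Fin N, ∃ t : ℤ,
      (d - ∏ i ∈ T, c i) * ∏ j, z j ≡ t * g k [ZMOD p k] :=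
  witness_encryption_decrypt_zero_general n ℓ N S T hdisj hcover p g a z c d hc hd
end

section
/- Let m ≥ 1 and n = m². For a triple (r, c, v) ∈ (Fin n)³, define F(r,c,v) to be the 4-element subset {(0, r, c), (1, r, v), (2, c, v), (3, box(r,c), v)} of the constraint set K = Fin 4 × Fin n × Fin n, where box(r,c) = m·⌊r/m⌋ + ⌊c/m⌋. Then for any set P of triples in (Fin n)³, the family {F(t) : t ∈ P} covers every element of K exactly once (i.e., the sets F(t) for t ∈ P are pairwise disjoint and their union is K) if and only if there exists a function g : Fin n × Fin n → Fin n such that P = {(r, c, g(r,c)) : (r,c) ∈ Fin n × Fin n} and g is a valid Sudoku solution, meaning: for every row r the map c ↦ g(r,c) is a bijection of Fin n, for every column c the map r ↦ g(r,c) is a bijection of Fin n, and for every box index b the map from the m² cells of box b to Fin n given by g is a bijection. -/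
/-- The box index of the cell `(r, c)` in an `m² × m²` Sudoku grid:
`box(r,c) = m·⌊r/m⌋ + ⌊c/m⌋`. -/
def sudokuBox (m : ℕ) (r c : Fin (m ^ 2)) : Fin (m ^ 2) :=
  ⟨m * ((r : ℕ) / m) + (c : ℕ) / m, by
    rcases Nat.eq_zero_or_pos m with h | h
    · exact absurd r.isLt (by simp [h])
    · have hr : (r : ℕ) / m < m :=
        Nat.div_lt_of_lt_mul (lt_of_lt_of_le r.isLt (le_of_eq (pow_two m)))
      have hc : (c : ℕ) / m < m :=
        Nat.div_lt_of_lt_mul (lt_of_lt_of_le c.isLt (le_of_eq (pow_two m)))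
      calc m * ((r : ℕ) / m) + (c : ℕ) / m
          < m * ((r : ℕ) / m) + m := Nat.add_lt_add_left hc _
        _ = m * ((r : ℕ) / m + 1) := by ring
        _ ≤ m * m := Nat.mul_le_mul_left m hr
        _ = m ^ 2 := (pow_two m).symm⟩

/-- The 4-element constraint set associated to the candidate assignment
`(r, c, v)` ("cell `(r,c)` holds value `v`"): it hits the cell constraint
`(0, r, c)`, the row constraint `(1, r, v)`, the column constraint `(2, c, v)`,
and the box constraint `(3, box(r,c), v)`. -/
def sudokuSets (m : ℕ) (t : Fin (m ^ 2) × Fin (m ^ 2) × Fin (m ^ 2)) :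
    Set (Fin 4 × Fin (m ^ 2) × Fin (m ^ 2)) :=
  {((0 : Fin 4), t.1, t.2.1), ((1 : Fin 4), t.1, t.2.2), ((2 : Fin 4), t.2.1, t.2.2),
    ((3 : Fin 4), sudokuBox m t.1 t.2.1, t.2.2)}

/-- Correctness of the reduction from `m² × m²` Sudoku to Exact Cover: a set `P`
of candidate assignments `(r, c, v)` yields a family `{F(t) : t ∈ P}` covering
every constraint in `Fin 4 × Fin n × Fin n` exactly once (pairwise disjoint
with union everything) if and only if `P` is the graph of a function
`g : Fin n × Fin n → Fin n` that is a valid Sudoku solution: `g` is bijective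
on every row, on every column, and on every box. -/
theorem sudoku_exact_cover_correct (m : ℕ) (hm : 1 ≤ m)
    (P : Set (Fin (m ^ 2) × Fin (m ^ 2) × Fin (m ^ 2))) :
    ((∀ t ∈ P, ∀ t' ∈ P, t ≠ t' → Disjoint (sudokuSets m t) (sudokuSets m t')) ∧
      (⋃ t ∈ P, sudokuSets m t) = Set.univ) ↔
    (∃ g : Fin (m ^ 2) × Fin (m ^ 2) → Fin (m ^ 2),
      P = {t | t.2.2 = g (t.1, t.2.1)} ∧
      (∀ r : Fin (m ^ 2), Function.Bijective fun c => g (r, c)) ∧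
      (∀ c : Fin (m ^ 2), Function.Bijective fun r => g (r, c)) ∧
      (∀ b : Fin (m ^ 2),
        Function.Bijective fun rc : {rc : Fin (m ^ 2) × Fin (m ^ 2) //
          sudokuBox m rc.1 rc.2 = b} => g rc.val)) := by
  constructor
  · rintro ⟨hdisj, hcover⟩
    have key : ∀ t ∈ P, ∀ t' ∈ P, ∀ a, a ∈ sudokuSets m t → a ∈ sudokuSets m t' → t = t' := by
      intro t ht t' ht' a ha ha'
      by_contra hne
      exact Set.disjoint_left.mp (hdisj t ht t' ht' hne) ha ha'
    have hcov : ∀ a : Fin 4 × Fin (m ^ 2) × Fin (m ^ 2), ∃ t ∈ P, a ∈ sudokuSets m t := by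
      intro a
      have : a ∈ ⋃ t ∈ P, sudokuSets m t := by rw [hcover]; trivial
      simpa using this
    have hex : ∀ r c : Fin (m ^ 2), ∃ v, (r, c, v) ∈ P := by
      intro r c
      obtain ⟨t, ht, hmem⟩ := hcov ((0 : Fin 4), r, c)
      obtain ⟨r', c', v'⟩ := t
      simp only [sudokuSets, Set.mem_insert_iff, Set.mem_singleton_iff, Prod.mk.injEq] at hmem
      rcases hmem with ⟨_, h1, h2⟩ | ⟨h, _⟩ | ⟨h, _⟩ | ⟨h, _⟩
      · exact ⟨v', by rwa [h1, h2]⟩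
      · exact absurd h (by decide)
      · exact absurd h (by decide)
      · exact absurd h (by decide)
    choose g hg using hex
    have huniq : ∀ r c v, (r, c, v) ∈ P → v = g r c := by
      intro r c v hv
      have := key (r, c, v) hv (r, c, g r c) (hg r c) ((0 : Fin 4), r, c)
        (by simp [sudokuSets]) (by simp [sudokuSets])
      simpa using congrArg (fun t => t.2.2) this
    refine ⟨fun rc => g rc.1 rc.2, ?_, ?_, ?_, ?_⟩
    · ext ⟨r, c, v⟩
      simp only [Set.mem_setOf_eq]
      constructor
      · exact huniq r c v
      · rintro rfl; exact hg r c
    · intro r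
      constructor
      · intro c c' h
        have := key (r, c, g r c) (hg r c) (r, c', g r c') (hg r c')
          ((1 : Fin 4), r, g r c) (by simp [sudokuSets]) (by simp [sudokuSets, h])
        simpa using congrArg (fun t => t.2.1) this
      · intro v
        obtain ⟨t, ht, hmem⟩ := hcov ((1 : Fin 4), r, v)
        obtain ⟨r', c', v'⟩ := t
        simp only [sudokuSets, Set.mem_insert_iff, Set.mem_singleton_iff, Prod.mk.injEq] at hmem
        rcases hmem with ⟨h, _⟩ | ⟨_, h1, h2⟩ | ⟨h, _⟩ | ⟨h, _⟩
        · exact absurd h (by decide)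
        · subst h1; subst h2
          exact ⟨c', (huniq r c' v ht).symm⟩
        · exact absurd h (by decide)
        · exact absurd h (by decide)
    · intro c
      constructor
      · intro r r' h
        have := key (r, c, g r c) (hg r c) (r', c, g r' c) (hg r' c)
          ((2 : Fin 4), c, g r c) (by simp [sudokuSets]) (by simp [sudokuSets, h])
        simpa using congrArg (fun t => t.1) this
      · intro v
        obtain ⟨t, ht, hmem⟩ := hcov ((2 : Fin 4), c, v)
        obtain ⟨r', c', v'⟩ := t
        simp only [sudokuSets, Set.mem_insert_iff, Set.mem_singleton_iff, Prod.mk.injEq] at hmem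
        rcases hmem with ⟨h, _⟩ | ⟨h, _⟩ | ⟨_, h1, h2⟩ | ⟨h, _⟩
        · exact absurd h (by decide)
        · exact absurd h (by decide)
        · subst h1; subst h2
          exact ⟨r', (huniq r' c v ht).symm⟩
        · exact absurd h (by decide)
    · intro b
      constructor
      · rintro ⟨⟨r, c⟩, hb⟩ ⟨⟨r', c'⟩, hb'⟩ h
        simp only at h
        have hbeq : sudokuBox m r c = sudokuBox m r' c' := hb.trans hb'.symm
        have := key (r, c, g r c) (hg r c) (r', c', g r' c') (hg r' c')
          ((3 : Fin 4), sudokuBox m r c, g r c)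
          (by simp [sudokuSets]) (by simp [sudokuSets, hbeq, h])
        have h1 := congrArg (fun t => t.1) this
        have h2 := congrArg (fun t => t.2.1) this
        simp only at h1 h2
        subst h1; subst h2
        rfl
      · intro v
        obtain ⟨t, ht, hmem⟩ := hcov ((3 : Fin 4), b, v)
        obtain ⟨r', c', v'⟩ := t
        simp only [sudokuSets, Set.mem_insert_iff, Set.mem_singleton_iff, Prod.mk.injEq] at hmem
        rcases hmem with ⟨h, _⟩ | ⟨h, _⟩ | ⟨h, _⟩ | ⟨_, h1, h2⟩
        · exact absurd h (by decide)
        · exact absurd h (by decide)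
        · exact absurd h (by decide)
        · subst h2
          exact ⟨⟨(r', c'), h1.symm⟩, (huniq r' c' v ht).symm⟩
  · rintro ⟨g, rfl, hrow, hcol, hbox⟩
    constructor
    · rintro ⟨r, c, v⟩ ht ⟨r', c', v'⟩ ht' hne
      simp only [Set.mem_setOf_eq] at ht ht'
      subst ht; subst ht'
      rw [Set.disjoint_left]
      rintro a ha ha'
      simp only [sudokuSets, Set.mem_insert_iff, Set.mem_singleton_iff] at ha ha'
      have goal : ¬ ((r, c) = (r', c')) := by
        intro h
        injection h with h1 h2
        subst h1; subst h2
        exact hne rfl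
      rcases ha with rfl | rfl | rfl | rfl <;>
        rcases ha' with h | h | h | h <;>
        injection h with h0 h23 <;>
        first
        | exact absurd h0 (by decide)
        | skip
      · injection h23 with h1 h2
        exact goal (by rw [h1, h2])
      · injection h23 with h1 h2
        subst h1
        have := (hrow r).injective h2
        exact goal (by rw [this])
      · injection h23 with h1 h2
        subst h1
        have := (hcol c).injective h2
        exact goal (by rw [this])
      · injection h23 with h1 h2
        have := (hbox (sudokuBox m r c)).injective
          (a₁ := ⟨(r, c), rfl⟩) (a₂ := ⟨(r', c'), h1.symm⟩) h2
        exact goal (congrArg Subtype.val this)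
    · ext ⟨i, x, y⟩
      simp only [Set.mem_iUnion, Set.mem_univ, iff_true, Set.mem_setOf_eq]
      fin_cases i
      · exact ⟨(x, y, g (x, y)), rfl, by simp [sudokuSets]⟩
      · obtain ⟨c, hc⟩ := (hrow x).surjective y
        exact ⟨(x, c, y), by simpa using hc.symm, by simp [sudokuSets]⟩
      · obtain ⟨r, hr⟩ := (hcol x).surjective y
        exact ⟨(r, x, y), by simpa using hr.symm, by simp [sudokuSets]⟩
      · obtain ⟨⟨⟨r, c⟩, hb⟩, hv⟩ := (hbox x).surjective y
        exact ⟨(r, c, y), by simpa using hv.symm, by simp [sudokuSets, hb]⟩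
end

section
/- Let C and Q be finite types (cells and piece labels), let ι be a finite index set of placements, and for each i ∈ ι let cells(i) be a finite subset of C and piece(i) ∈ Q. For each i define the subset S(i) = {inl(x) : x ∈ cells(i)} ∪ {inr(piece(i))} of the disjoint union C ⊕ Q. Then for any X ⊆ ι, the family {S(i) : i ∈ X} covers every element of C ⊕ Q exactly once (i.e., the S(i) for i ∈ X are pairwise disjoint with union all of C ⊕ Q) if and only if: (a) the sets cells(i) for i ∈ X are pairwise disjoint and their union is C, and (b) the map i ↦ piece(i) restricted to X is a bijection from X onto Q. -/
/-- Correctness of the reduction from Pentomino tiling to Exact Cover: with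
board cells `C`, piece labels `Q`, and placements `i : ι` covering cells
`cells i` using piece `piece i`, the sets
`S i = {inl x : x ∈ cells i} ∪ {inr (piece i)}` over `i ∈ X` cover every
element of `C ⊕ Q` exactly once (pairwise disjoint with union everything) if
and only if (a) the `cells i` for `i ∈ X` are pairwise disjoint with union all
of `C`, and (b) `piece` restricted to `X` is a bijection onto `Q`. -/
theorem pentomino_exact_cover_correct
    (C Q ι : Type*) [Fintype C] [Fintype Q] [Fintype ι] [DecidableEq C]
    (cells : ι → Finset C) (piece : ι → Q)
    (S : ι → Set (C ⊕ Q))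
    (hS : ∀ i, S i = (Sum.inl '' (cells i : Set C)) ∪ {Sum.inr (piece i)})
    (X : Finset ι) :
    ((∀ i ∈ X, ∀ j ∈ X, i ≠ j → Disjoint (S i) (S j)) ∧
      (⋃ i ∈ X, S i) = Set.univ) ↔
    (((∀ i ∈ X, ∀ j ∈ X, i ≠ j → Disjoint (cells i) (cells j)) ∧
        X.biUnion cells = Finset.univ) ∧
      Set.BijOn piece (X : Set ι) Set.univ) := by
  constructor
  · rintro ⟨hdisj, huniv⟩
    refine ⟨⟨?_, ?_⟩, ?_, ?_, ?_⟩
    · intro i hi j hj hij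
      have h := hdisj i hi j hj hij
      rw [hS i, hS j, Set.disjoint_left] at h
      rw [Finset.disjoint_left]
      intro a ha haj
      exact h (Set.mem_union_left _ ⟨a, ha, rfl⟩) (Set.mem_union_left _ ⟨a, haj, rfl⟩)
    · ext c
      simp only [Finset.mem_biUnion, Finset.mem_univ, iff_true]
      have hc : (Sum.inl c : C ⊕ Q) ∈ ⋃ i ∈ X, S i := huniv ▸ Set.mem_univ _
      simp only [Set.mem_iUnion] at hc
      obtain ⟨i, hi, hmem⟩ := hc
      rw [hS i] at hmem
      rcases hmem with ⟨x, hx, hxeq⟩ | h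
      · obtain rfl : x = c := Sum.inl.inj hxeq
        exact ⟨i, hi, hx⟩
      · simp at h
    · intro i _; trivial
    · intro i hi j hj hpq
      by_contra hij
      have h := hdisj i hi j hj hij
      rw [hS i, hS j, Set.disjoint_left] at h
      exact h (Set.mem_union_right _ rfl) (Set.mem_union_right _ (by rw [hpq]; rfl))
    · intro q _
      have hq : (Sum.inr q : C ⊕ Q) ∈ ⋃ i ∈ X, S i := huniv ▸ Set.mem_univ _
      simp only [Set.mem_iUnion] at hq
      obtain ⟨i, hi, hmem⟩ := hq
      rw [hS i] at hmem
      rcases hmem with ⟨x, _, hx⟩ | h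
      · exact absurd hx (by simp)
      · exact ⟨i, hi, by simpa using h.symm⟩
  · rintro ⟨⟨hcdisj, hcuniv⟩, _, hinj, hsurj⟩
    constructor
    · intro i hi j hj hij
      rw [hS i, hS j, Set.disjoint_left]
      rintro a (⟨x, hx, rfl⟩ | ha) hb
      · rcases hb with ⟨y, hy, heq⟩ | hb
        · obtain rfl : y = x := Sum.inl.inj heq
          exact Finset.disjoint_left.mp (hcdisj i hi j hj hij) hx hy
        · simp at hb
      · have ha' : a = Sum.inr (piece i) := ha
        rcases hb with ⟨y, _, heq⟩ | hb
        · rw [ha'] at heq; simp at heq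
        · have hb' : a = Sum.inr (piece j) := hb
          rw [ha'] at hb'
          exact hij (hinj hi hj (Sum.inr.inj hb'))
    · ext a
      simp only [Set.mem_iUnion, Set.mem_univ, iff_true]
      rcases a with c | q
      · have : c ∈ X.biUnion cells := hcuniv ▸ Finset.mem_univ _
        obtain ⟨i, hi, hc⟩ := Finset.mem_biUnion.mp this
        exact ⟨i, hi, by rw [hS i]; exact Set.mem_union_left _ ⟨c, hc, rfl⟩⟩
      · obtain ⟨i, hi, hq⟩ := hsurj (Set.mem_univ q)
        exact ⟨i, hi, by rw [hS i, hq]; exact Set.mem_union_right _ rfl⟩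
end
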